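/- Let T > 0, m₀ ∈ ℝ, L_m ∈ (0,1), let b : ℝ × ℝ × [0,T] → ℝ be continuous and L_m-Lipschitz in its first argument, let l : [0,T] → ℝ and x : [0,T] → ℝ be continuous, and let w be the unique continuous solution of w(t) = x(t) − sup_{0≤s≤t}(x(s) − b(M(w)(s), l(s), s))⁺. Define k(t) = sup_{0≤s≤t}(x(s) − b(M(w)(s), l(s), s))⁺. Then: (a) k is nondecreasing on [0,T]; (b) w(t) ≤ b(M(w)(t), l(t), t) for every t ∈ [0,T]; (c) if 0 ≤ t₁ < t₂ ≤ T and w(s) < b(M(w)(s), l(s), s) for all s ∈ (t₁, t₂], then k(t₂) = k(t₁); that is, the reflection term increases only when the path is on the boundary. -/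

import Mathlib

/-!
Since `w = x − k`, the inequality `w ≤ b` is just `x − b ≤ (x − b)⁺ ≤ k`. On the compact
time interval the running maximum `k` of the continuous function `(x − b)⁺` is attained, so if
`k` increased between `t₁` and `t₂` it would equal `(x − b)⁺` at some `u ∈ (t₁, t₂]`; there
`w(u) < b` reads `x − b < k = (x − b)⁺`, which forces `k(u) = 0`, impossible after an increase.
Continuity of `(x − b)⁺` rests on continuity of the running minimum, an infimum over a compact
parameter set.
-/

open Set

/-- Running minimum of a continuous path `w` on `[0,T]`, started at level `m₀`:
`M(w)(t) = min(m₀, inf_{0 ≤ s ≤ t} w(s))`. -/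
noncomputable def runMin (T m₀ : ℝ) (w : C(Set.Icc (0:ℝ) T, ℝ))
    (t : Set.Icc (0:ℝ) T) : ℝ :=
  min m₀ (sInf (w '' Set.Iic t))

/-- The Skorokhod-type map `w ↦ (t ↦ x(t) − sup_{0≤s≤t} (x(s) − b(M(w)(s), l(s), s))⁺)`. -/
noncomputable def skMap (T m₀ : ℝ) (b : ℝ → ℝ → Set.Icc (0:ℝ) T → ℝ)
    (l x : C(Set.Icc (0:ℝ) T, ℝ)) (w : C(Set.Icc (0:ℝ) T, ℝ))
    (t : Set.Icc (0:ℝ) T) : ℝ :=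
  x t - sSup ((fun s => max (x s - b (runMin T m₀ w s) (l s) s) 0) '' Set.Iic t)

/-- The reflection term `k(t) = sup_{0≤s≤t} (x(s) − b(M(w)(s), l(s), s))⁺`. -/
noncomputable def reflTerm (T m₀ : ℝ) (b : ℝ → ℝ → Set.Icc (0:ℝ) T → ℝ)
    (l x : C(Set.Icc (0:ℝ) T, ℝ)) (w : C(Set.Icc (0:ℝ) T, ℝ))
    (t : Set.Icc (0:ℝ) T) : ℝ :=
  sSup ((fun s => max (x s - b (runMin T m₀ w s) (l s) s) 0) '' Set.Iic t)

theorem image_Iic_eq_range_comp_min {α : Type*} [LinearOrder α] (f : α → ℝ) (t : α) :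
    f '' Iic t = range fun s => f (min s t) := by
  ext y
  constructor
  · rintro ⟨s, hs, rfl⟩
    exact ⟨s, congrArg f (min_eq_left hs)⟩
  · rintro ⟨s, rfl⟩
    exact ⟨min s t, min_le_right s t, rfl⟩

section RunningExtrema

variable {α : Type*} [TopologicalSpace α] [LinearOrder α] [OrderClosedTopology α] [CompactSpace α]
  {f : α → ℝ}

theorem continuous_sInf_image_Iic (hf : Continuous f) :
    Continuous fun t => sInf (f '' Iic t) := by
  simp_rw [image_Iic_eq_range_comp_min, ← image_univ]
  exact isCompact_univ.continuous_sInf (f := fun t s => f (min s t)) (by fun_prop)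

theorem isCompact_image_Iic (hf : Continuous f) (t : α) : IsCompact (f '' Iic t) :=
  isClosed_Iic.isCompact.image hf

theorem le_sSup_image_Iic (hf : Continuous f) {s t : α} (hst : s ≤ t) :
    f s ≤ sSup (f '' Iic t) :=
  le_csSup (isCompact_image_Iic hf t).bddAbove (mem_image_of_mem f hst)

theorem monotone_sSup_image_Iic (hf : Continuous f) : Monotone fun t => sSup (f '' Iic t) :=
  fun _ t₂ h => csSup_le_csSup (isCompact_image_Iic hf t₂).bddAbove
    (nonempty_Iic.image f) (image_mono (Iic_subset_Iic.mpr h))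

theorem exists_mem_Ioc_eq_sSup_image_Iic (hf : Continuous f) {t₁ t₂ : α}
    (h : sSup (f '' Iic t₁) < sSup (f '' Iic t₂)) :
    ∃ u ∈ Ioc t₁ t₂, f u = sSup (f '' Iic t₂) := by
  obtain ⟨u, hu, hfu⟩ := (isCompact_image_Iic hf t₂).sSup_mem (nonempty_Iic.image f)
  refine ⟨u, ⟨lt_of_not_ge fun hut₁ => ?_, hu⟩, hfu⟩
  exact (le_sSup_image_Iic hf hut₁).not_gt (hfu ▸ h)

theorem sSup_image_Iic_posPart_eq {g : α → ℝ} (hg : Continuous g) {t₁ t₂ : α} (h₁₂ : t₁ ≤ t₂)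
    (hlt : ∀ s, t₁ < s → s ≤ t₂ → g s < sSup ((fun r => max (g r) 0) '' Iic s)) :
    sSup ((fun r => max (g r) 0) '' Iic t₂) = sSup ((fun r => max (g r) 0) '' Iic t₁) := by
  have hcont : Continuous fun r => max (g r) 0 := hg.max continuous_const
  refine le_antisymm (not_lt.mp fun hinc => ?_) (monotone_sSup_image_Iic hcont h₁₂)
  obtain ⟨u, ⟨ht₁u, hut₂⟩, hmax⟩ := exists_mem_Ioc_eq_sSup_image_Iic hcont hinc
  have hku : sSup ((fun r => max (g r) 0) '' Iic u) = max (g u) 0 :=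
    le_antisymm (hmax ▸ monotone_sSup_image_Iic hcont hut₂) (le_sSup_image_Iic hcont le_rfl)
  -- `u` realises the running maximum, so `g u < max (g u) 0` forces that maximum to be `0`
  have hgu : g u < 0 := by
    have := hlt u ht₁u hut₂
    rw [hku, lt_max_iff] at this
    exact this.resolve_left (lt_irrefl _)
  have hk₁ : 0 ≤ sSup ((fun r => max (g r) 0) '' Iic t₁) :=
    (le_max_right _ _).trans (le_sSup_image_Iic hcont le_rfl)
  rw [← hmax, max_eq_right hgu.le] at hinc
  exact hinc.not_ge hk₁

end RunningExtrema

theorem continuous_runMin (T m₀ : ℝ) (w : C(Set.Icc (0:ℝ) T, ℝ)) :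
    Continuous (runMin T m₀ w) :=
  continuous_const.min (continuous_sInf_image_Iic w.continuous)

theorem stmt2_general (T m₀ : ℝ)
    (b : ℝ → ℝ → Set.Icc (0:ℝ) T → ℝ)
    (hb : Continuous fun p : ℝ × ℝ × Set.Icc (0:ℝ) T => b p.1 p.2.1 p.2.2)
    (l x w : C(Set.Icc (0:ℝ) T, ℝ))
    (hw : ∀ t : Set.Icc (0:ℝ) T, w t = skMap T m₀ b l x w t) :
    Monotone (reflTerm T m₀ b l x w) ∧
    (∀ t : Set.Icc (0:ℝ) T, w t ≤ b (runMin T m₀ w t) (l t) t) ∧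
    (∀ t₁ t₂ : Set.Icc (0:ℝ) T, t₁ < t₂ →
      (∀ s : Set.Icc (0:ℝ) T, t₁ < s → s ≤ t₂ →
        w s < b (runMin T m₀ w s) (l s) s) →
      reflTerm T m₀ b l x w t₂ = reflTerm T m₀ b l x w t₁) := by
  set g : Set.Icc (0:ℝ) T → ℝ := fun s => x s - b (runMin T m₀ w s) (l s) s
  have hg : Continuous g :=
    x.continuous.sub <|
      hb.comp ((continuous_runMin T m₀ w).prodMk (l.continuous.prodMk continuous_id))
  have hpos : Continuous fun s => max (g s) 0 := hg.max continuous_const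
  have hwk : ∀ t, w t = x t - reflTerm T m₀ b l x w t := hw
  have hgk : ∀ t, g t ≤ reflTerm T m₀ b l x w t :=
    fun t => (le_max_left _ _).trans (le_sSup_image_Iic hpos le_rfl)
  refine ⟨monotone_sSup_image_Iic hpos, fun t => ?_, fun t₁ t₂ h₁₂ hbelow =>
    sSup_image_Iic_posPart_eq hg h₁₂.le fun s h₁s hs₂ => ?_⟩
  · linarith [hwk t, hgk t]
  · show x s - b (runMin T m₀ w s) (l s) s < reflTerm T m₀ b l x w s
    linarith [hwk s, hbelow s h₁s hs₂]

/-- Properties of the solution of the reflection fixed-point problem: the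
reflection term `k` is nondecreasing, the path stays below the boundary, and
`k` increases only when the path is on the boundary. -/
theorem stmt2 (T m₀ Lm : ℝ) (hT : 0 < T) (hLm : Lm ∈ Set.Ioo (0:ℝ) 1)
    (b : ℝ → ℝ → Set.Icc (0:ℝ) T → ℝ)
    (hb : Continuous fun p : ℝ × ℝ × Set.Icc (0:ℝ) T => b p.1 p.2.1 p.2.2)
    (hbLip : ∀ (m m' y : ℝ) (t : Set.Icc (0:ℝ) T),
      |b m y t - b m' y t| ≤ Lm * |m - m'|)
    (l x w : C(Set.Icc (0:ℝ) T, ℝ))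
    (hw : ∀ t : Set.Icc (0:ℝ) T, w t = skMap T m₀ b l x w t) :
    Monotone (reflTerm T m₀ b l x w) ∧
    (∀ t : Set.Icc (0:ℝ) T, w t ≤ b (runMin T m₀ w t) (l t) t) ∧
    (∀ t₁ t₂ : Set.Icc (0:ℝ) T, t₁ < t₂ →
      (∀ s : Set.Icc (0:ℝ) T, t₁ < s → s ≤ t₂ →
        w s < b (runMin T m₀ w s) (l s) s) →
      reflTerm T m₀ b l x w t₂ = reflTerm T m₀ b l x w t₁) :=
  stmt2_general T m₀ b hb l x w hw
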